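/- The operator ∇⁰_Z defined on Schwartz functions f : ℝ × ℝ → ℂ by (∇⁰_Z f)(x,y) = (πix/μ) f(x,y) satisfies the connection Leibniz rule ∇⁰_Z(f·φ) = (∇⁰_Z f)·φ + f·δ_Z(φ), where (f·φ)(x,y) = Σ_p conj(φ)(x+2pμ, y+2pν, p) f(x+2pμ, y+2pν) and (δ_Z φ)(x,y,p) = 2πi p φ(x,y,p). -/

import Mathlib

open Real

noncomputable def deltaZ (φ : ℝ → ℝ → ℤ → ℂ) (x y : ℝ) (p : ℤ) : ℂ :=
  2 * (π : ℂ) * Complex.I * (p : ℂ) * φ x y p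

/-- The right module action (f·φ)(x,y) = Σ_p conj(φ(x+2pμ, y+2pν, p)) f(x+2pμ, y+2pν). -/
noncomputable def act (μ ν : ℝ) (f : ℝ → ℝ → ℂ) (φ : ℝ → ℝ → ℤ → ℂ) (x y : ℝ) : ℂ :=
  ∑' p : ℤ, (starRingEnd ℂ) (φ (x + 2 * p * μ) (y + 2 * p * ν) p) * f (x + 2 * p * μ) (y + 2 * p * ν)

noncomputable def nablaZ (μ : ℝ) (f : ℝ → ℝ → ℂ) (x y : ℝ) : ℂ :=
  (π : ℂ) * Complex.I * (x : ℂ) / (μ : ℂ) * f x y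

/-- ∇⁰_Z satisfies the connection Leibniz rule ∇⁰_Z(f·φ) = (∇⁰_Z f)·φ + f·δ_Z(φ). -/
theorem stmt4 (c : ℕ) (hc : 0 < c) (μ ν : ℝ) (hμ : μ ≠ 0) (hν : ν ≠ 0)
    (f : SchwartzMap (ℝ × ℝ) ℂ) (φ : ℝ → ℝ → ℤ → ℂ)
    (hφ : ∀ p : ℤ, ContDiff ℝ (⊤ : ℕ∞) (fun xy : ℝ × ℝ => φ xy.1 xy.2 p))
    (hφfin : {p : ℤ | ∃ x y, φ x y p ≠ 0}.Finite) :
    ∀ x y : ℝ,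
      nablaZ μ (act μ ν (fun a b => f (a, b)) φ) x y
        = act μ ν (nablaZ μ (fun a b => f (a, b))) φ x y
          + act μ ν (fun a b => f (a, b)) (deltaZ φ) x y := by
  intro x y
  unfold nablaZ act deltaZ
  have hsum : ∀ g : ℤ → ℂ,
      Summable (fun p : ℤ =>
        (starRingEnd ℂ) (φ (x + 2 * p * μ) (y + 2 * p * ν) p) * g p) := by
    intro g
    apply summable_of_ne_finset_zero (s := hφfin.toFinset)
    intro p hp
    have : φ (x + 2 * p * μ) (y + 2 * p * ν) p = 0 := by
      by_contra h
      exact hp (hφfin.mem_toFinset.mpr ⟨_, _, h⟩)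
    simp [this]
  have hA := hsum (fun p => (π : ℂ) * Complex.I * ((x : ℂ) + 2 * p * μ) / μ *
    f (x + 2 * p * μ, y + 2 * p * ν))
  have hB : Summable (fun p : ℤ =>
      (starRingEnd ℂ) (2 * (π : ℂ) * Complex.I * (p : ℂ) *
        φ (x + 2 * p * μ) (y + 2 * p * ν) p) * f (x + 2 * p * μ, y + 2 * p * ν)) := by
    have := hsum (fun p => (starRingEnd ℂ) (2 * (π : ℂ) * Complex.I * (p : ℂ)) *
      f (x + 2 * p * μ, y + 2 * p * ν))
    convert this using 2 with p
    simp [map_mul]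
    ring
  rw [← tsum_mul_left, ← Summable.tsum_add (by push_cast; exact hA) hB]
  congr 1
  ext p
  have hμc : (μ : ℂ) ≠ 0 := by exact_mod_cast hμ
  simp only [map_mul, Complex.conj_I, map_ofNat, Complex.conj_ofReal, map_intCast]
  push_cast
  field_simp
  ring
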